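/- arXiv:2102.00725 — 7 statements merged into one kernel-verified Lean document; each statement's English description precedes it below -/
import Mathlib

section
/- Let S be a nonempty set, c > 0, and g : S → ℝ with g(t) ≥ 0 for all t ∈ S. Assume that for every ordered pair (t, t') ∈ S × S, either (g(t') > 0 and 2^{−1/4} ≤ g(t)/g(t') ≤ 2^{1/4}) or g(t) ≤ 2c. Then either g(t) ≤ 2c for all t ∈ S, or there exists a natural number κ such that 2^{κ/2}·c ≤ g(t) ≤ 2^{κ/2+1}·c for all t ∈ S. -/
/-- dyadic level-band consequence of the pairwise ratio/smallness
condition on a nonnegative function `g` on a nonempty set `S`. -/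
theorem stmt_2 {S : Type*} [Nonempty S] (c : ℝ) (hc : 0 < c) (g : S → ℝ)
    (hg : ∀ t, 0 ≤ g t)
    (h : ∀ t t' : S,
      (0 < g t' ∧ (2:ℝ) ^ (-(1:ℝ)/4) ≤ g t / g t' ∧ g t / g t' ≤ (2:ℝ) ^ ((1:ℝ)/4))
        ∨ g t ≤ 2 * c) :
    (∀ t, g t ≤ 2 * c) ∨
      ∃ κ : ℕ, ∀ t, (2:ℝ) ^ ((κ:ℝ)/2) * c ≤ g t ∧ g t ≤ (2:ℝ) ^ ((κ:ℝ)/2 + 1) * c := by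
  by_cases hall : ∀ t, g t ≤ 2 * c
  · exact Or.inl hall
  push_neg at hall
  obtain ⟨t₀, ht₀⟩ := hall
  right
  have hgt₀ : 0 < g t₀ := lt_trans (by linarith) ht₀
  set a : ℝ := (2:ℝ) ^ ((1:ℝ)/4) with ha
  have hapos : 0 < a := Real.rpow_pos_of_pos (by norm_num) _
  have haneg : (2:ℝ) ^ (-(1:ℝ)/4) = a⁻¹ := by
    rw [ha, ← Real.rpow_neg (by norm_num)]
    norm_num
  have ha2 : a * a = (2:ℝ) ^ ((1:ℝ)/2) := by
    rw [ha, ← Real.rpow_add (by norm_num)]; norm_num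
  have halt : a < 2 := by
    have : a < (2:ℝ) ^ (1:ℝ) :=
      Real.rpow_lt_rpow_of_exponent_lt (by norm_num) (by norm_num)
    simpa using this
  -- band around g t₀
  have key : ∀ t, g t₀ / a ≤ g t ∧ g t ≤ a * g t₀ := by
    intro t
    rcases h t₀ t with ⟨hpos, hlo, hhi⟩ | hsmall
    · rw [haneg] at hlo
      rw [div_le_iff₀ hpos] at hhi
      rw [le_div_iff₀ hpos] at hlo
      constructor
      · rw [div_le_iff₀ hapos]
        nlinarith
      · nlinarith [inv_pos.mpr hapos, mul_pos (inv_pos.mpr hapos) hapos,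
          mul_inv_cancel₀ (ne_of_gt hapos)]
    · exact absurd hsmall (not_le.mpr ht₀)
  set m : ℝ := g t₀ / a with hm
  have hmpos : 0 < m := div_pos hgt₀ hapos
  have hmc : c < m := by
    have : 2 * c / a ≤ m := by rw [hm]; gcongr
    have h2 : c < 2 * c / a := by
      rw [lt_div_iff₀ hapos]; nlinarith
    linarith
  have hmc1 : (1:ℝ) < m / c := (one_lt_div hc).mpr hmc
  have hmcpos : 0 < m / c := by positivity
  set x : ℝ := 2 * Real.logb 2 (m / c) with hx
  have hxpos : 0 ≤ x := by
    have := Real.logb_pos (by norm_num : (1:ℝ) < 2) hmc1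
    rw [hx]; linarith
  refine ⟨⌊x⌋₊, fun t => ?_⟩
  obtain ⟨hl, hu⟩ := key t
  have hfl : (⌊x⌋₊ : ℝ) ≤ x := Nat.floor_le hxpos
  have hfu : x < (⌊x⌋₊ : ℝ) + 1 := Nat.lt_floor_add_one x
  have hlow : (2:ℝ) ^ ((⌊x⌋₊ : ℝ)/2) ≤ m / c := by
    have : (2:ℝ) ^ ((⌊x⌋₊ : ℝ)/2) ≤ (2:ℝ) ^ (Real.logb 2 (m/c)) :=
      Real.rpow_le_rpow_of_exponent_le (by norm_num) (by rw [hx] at hfl; linarith)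
    rwa [Real.rpow_logb (by norm_num) (by norm_num) hmcpos] at this
  have hhigh : (2:ℝ) ^ ((1:ℝ)/2) * (m / c) ≤ (2:ℝ) ^ ((⌊x⌋₊ : ℝ)/2 + 1) := by
    have h1 : m / c ≤ (2:ℝ) ^ ((⌊x⌋₊ : ℝ)/2 + 1/2) := by
      have : (2:ℝ) ^ (Real.logb 2 (m/c)) ≤ (2:ℝ) ^ ((⌊x⌋₊ : ℝ)/2 + 1/2) :=
        Real.rpow_le_rpow_of_exponent_le (by norm_num) (by rw [hx] at hfu; linarith)
      rwa [Real.rpow_logb (by norm_num) (by norm_num) hmcpos] at this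
    calc (2:ℝ) ^ ((1:ℝ)/2) * (m / c)
        ≤ (2:ℝ) ^ ((1:ℝ)/2) * ((2:ℝ) ^ ((⌊x⌋₊ : ℝ)/2 + 1/2)) := by
          exact mul_le_mul_of_nonneg_left h1 (by positivity)
      _ = (2:ℝ) ^ ((⌊x⌋₊ : ℝ)/2 + 1) := by
          rw [← Real.rpow_add (by norm_num)]; ring_nf
  constructor
  · have : (2:ℝ) ^ ((⌊x⌋₊ : ℝ)/2) * c ≤ m := by
      rw [← le_div_iff₀ hc] at *; exact hlow
    linarith
  · have hgm : g t ≤ (2:ℝ) ^ ((1:ℝ)/2) * m := by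
      have : a * g t₀ = (2:ℝ) ^ ((1:ℝ)/2) * m := by
        rw [hm]; field_simp; nlinarith
      linarith [hu, this.symm.le]
    have : (2:ℝ) ^ ((1:ℝ)/2) * m ≤ (2:ℝ) ^ ((⌊x⌋₊ : ℝ)/2 + 1) * c := by
      rw [← div_le_iff₀ hc]
      calc (2:ℝ) ^ ((1:ℝ)/2) * m / c = (2:ℝ) ^ ((1:ℝ)/2) * (m / c) := by ring
        _ ≤ _ := hhigh
    linarith
end

section
/- Let T ≥ 1 be an integer, δ ∈ (0,1], B ≥ 0, and set c₀ = max(T^{−1/2}, B). Let Δ̄ > 4·c₀, let c ≥ 16 be a real number, let n ≥ 1 be an integer, and let a₁,…,a_n and e₁,…,e_n be real numbers such that a_j ≥ Δ̄ for every j and |(1/n)·∑_{j=1}^n e_j| ≤ √(log(2/δ)/(2n)). If n > (c/2)·log(2/δ)·Δ̄^{−2}, then (1/n)·∑_{j=1}^n (a_j + e_j) − √(log(2/δ)/(2n)) − 2·c₀ > 0. -/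
/-- deterministic core of Proposition 3 (low pulls of sub-optimal
arms in the gap-observation model). -/
theorem stmt_4 (T : ℕ) (hT : 1 ≤ T) (δ : ℝ) (hδ0 : 0 < δ) (hδ1 : δ ≤ 1)
    (B : ℝ) (hB : 0 ≤ B)
    (Δ : ℝ) (hΔ : 4 * max ((T:ℝ) ^ (-(1:ℝ)/2)) B < Δ)
    (c : ℝ) (hc : 16 ≤ c) (n : ℕ) (hn : 1 ≤ n)
    (a e : ℕ → ℝ) (ha : ∀ j ∈ Finset.Icc 1 n, Δ ≤ a j)
    (he : |(1/(n:ℝ)) * ∑ j ∈ Finset.Icc 1 n, e j| ≤ Real.sqrt (Real.log (2/δ) / (2*n)))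
    (hcount : (c/2) * Real.log (2/δ) * Δ⁻¹ ^ 2 < (n:ℝ)) :
    0 < (1/(n:ℝ)) * ∑ j ∈ Finset.Icc 1 n, (a j + e j)
        - Real.sqrt (Real.log (2/δ) / (2*n)) - 2 * max ((T:ℝ) ^ (-(1:ℝ)/2)) B := by
  set c₀ : ℝ := max ((T:ℝ) ^ (-(1:ℝ)/2)) B with hc₀
  have hnpos : (0:ℝ) < n := by exact_mod_cast Nat.lt_of_lt_of_le Nat.zero_lt_one hn
  have hTpos : (0:ℝ) < (T:ℝ) ^ (-(1:ℝ)/2) := by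
    apply Real.rpow_pos_of_pos
    exact_mod_cast Nat.lt_of_lt_of_le Nat.zero_lt_one hT
  have hc₀pos : 0 < c₀ := lt_of_lt_of_le hTpos (le_max_left _ _)
  have hΔpos : 0 < Δ := lt_trans (by linarith) hΔ
  have hL : 0 < Real.log (2/δ) := by
    apply Real.log_pos
    rw [lt_div_iff₀ hδ0]; linarith
  set L := Real.log (2/δ) with hLdef
  set s := Real.sqrt (L / (2*n)) with hs
  -- s < Δ / 4
  have hsn : s < Δ / 4 := by
    have h1 : L / (2*n) < (Δ/4)^2 := by
      rw [div_lt_iff₀ (by positivity)]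
      have h2 : 8 * L * Δ⁻¹ ^ 2 < (n:ℝ) := by nlinarith [sq_nonneg Δ⁻¹]
      have hΔinv : Δ⁻¹ ^ 2 = 1 / Δ^2 := by field_simp
      rw [hΔinv] at h2
      have hinv : (1/Δ^2) * Δ^2 = 1 := by field_simp
      nlinarith [mul_lt_mul_of_pos_right h2 (pow_pos hΔpos 2)]
    calc s < Real.sqrt ((Δ/4)^2) := by
            apply Real.sqrt_lt_sqrt (by positivity) h1
      _ = Δ/4 := Real.sqrt_sq (by positivity)
  -- average of a ≥ Δ
  have hsum : Δ ≤ (1/(n:ℝ)) * ∑ j ∈ Finset.Icc 1 n, a j := by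
    have hcard : (Finset.Icc 1 n).card = n := by simp
    have h1 : (n:ℝ) * Δ ≤ ∑ j ∈ Finset.Icc 1 n, a j := by
      calc (n:ℝ) * Δ = ∑ _j ∈ Finset.Icc 1 n, Δ := by
            rw [Finset.sum_const, hcard, nsmul_eq_mul]
        _ ≤ _ := Finset.sum_le_sum ha
    rw [one_div, inv_mul_eq_div, le_div_iff₀ hnpos]
    linarith
  have hesum : -s ≤ (1/(n:ℝ)) * ∑ j ∈ Finset.Icc 1 n, e j := neg_le_of_abs_le he
  have hsplit : (1/(n:ℝ)) * ∑ j ∈ Finset.Icc 1 n, (a j + e j)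
      = (1/(n:ℝ)) * ∑ j ∈ Finset.Icc 1 n, a j + (1/(n:ℝ)) * ∑ j ∈ Finset.Icc 1 n, e j := by
    rw [Finset.sum_add_distrib]; ring
  rw [hsplit]
  linarith
end

section
/- Let K, T, M ≥ 1 be integers. Let S be a finite index set with |S| ≤ 2M, and let (I_u)_{u∈S} be pairwise disjoint nonempty finite sets with ∑_{u∈S} |I_u| ≤ T. For each u ∈ S, let G_u be a finite set with |G_u| ≤ K, and for each k ∈ G_u let Δ_{k,u} and T_{k,u} be nonnegative real numbers with Δ_{k,u} ≤ √(K/|I_u|) and ∑_{k∈G_u} T_{k,u} ≤ |I_u|. Then ∑_{u∈S} ∑_{k∈G_u} Δ_{k,u}·T_{k,u} ≤ √(2·K·T·M). -/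
/-- regret-accounting bound for small-gap arms (bound on R₁(T)). -/
theorem stmt_7 {ι β κ : Type*} (K T M : ℕ) (hK : 1 ≤ K) (hT : 1 ≤ T) (hM : 1 ≤ M)
    (S : Finset ι) (hS : S.card ≤ 2 * M)
    (I : ι → Finset β) (hdisj : (S : Set ι).PairwiseDisjoint I)
    (hne : ∀ u ∈ S, (I u).Nonempty)
    (hsum : ∑ u ∈ S, (I u).card ≤ T)
    (G : ι → Finset κ) (hG : ∀ u ∈ S, (G u).card ≤ K)
    (Δ Tk : ι → κ → ℝ)
    (hΔ0 : ∀ u ∈ S, ∀ k ∈ G u, 0 ≤ Δ u k)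
    (hTk0 : ∀ u ∈ S, ∀ k ∈ G u, 0 ≤ Tk u k)
    (hΔ : ∀ u ∈ S, ∀ k ∈ G u, Δ u k ≤ Real.sqrt ((K : ℝ) / (I u).card))
    (hTk : ∀ u ∈ S, ∑ k ∈ G u, Tk u k ≤ ((I u).card : ℝ)) :
    ∑ u ∈ S, ∑ k ∈ G u, Δ u k * Tk u k ≤ Real.sqrt (2 * K * T * M) := by
  have step1 : ∀ u ∈ S, ∑ k ∈ G u, Δ u k * Tk u k ≤ Real.sqrt ((K : ℝ) * (I u).card) := by
    intro u hu
    have hc : (0:ℝ) < (I u).card := by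
      exact_mod_cast (hne u hu).card_pos
    calc ∑ k ∈ G u, Δ u k * Tk u k
        ≤ ∑ k ∈ G u, Real.sqrt ((K : ℝ) / (I u).card) * Tk u k := by
          apply Finset.sum_le_sum; intro k hk
          exact mul_le_mul_of_nonneg_right (hΔ u hu k hk) (hTk0 u hu k hk)
      _ = Real.sqrt ((K : ℝ) / (I u).card) * ∑ k ∈ G u, Tk u k := by
          rw [Finset.mul_sum]
      _ ≤ Real.sqrt ((K : ℝ) / (I u).card) * (I u).card := by
          exact mul_le_mul_of_nonneg_left (hTk u hu) (Real.sqrt_nonneg _)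
      _ = Real.sqrt ((K : ℝ) * (I u).card) := by
          have h : (K : ℝ) * (I u).card = ((K : ℝ) / (I u).card) * ((I u).card)^2 := by
            field_simp
          rw [h, Real.sqrt_mul (by positivity), Real.sqrt_sq hc.le]
  have step2 : ∑ u ∈ S, ∑ k ∈ G u, Δ u k * Tk u k
      ≤ ∑ u ∈ S, Real.sqrt ((K : ℝ) * (I u).card) :=
    Finset.sum_le_sum step1
  have cs : (∑ u ∈ S, Real.sqrt ((K : ℝ) * (I u).card)) ^ 2
      ≤ S.card * ∑ u ∈ S, ((K : ℝ) * (I u).card) := by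
    calc (∑ u ∈ S, Real.sqrt ((K : ℝ) * (I u).card)) ^ 2
        ≤ S.card * ∑ u ∈ S, Real.sqrt ((K : ℝ) * (I u).card) ^ 2 :=
          sq_sum_le_card_mul_sum_sq
      _ = S.card * ∑ u ∈ S, ((K : ℝ) * (I u).card) := by
          congr 1; apply Finset.sum_congr rfl; intro u hu
          rw [Real.sq_sqrt (by positivity)]
  have hbound : S.card * ∑ u ∈ S, ((K : ℝ) * (I u).card) ≤ 2 * K * T * M := by
    have h1 : (S.card : ℝ) ≤ 2 * M := by exact_mod_cast hS
    have h2 : ∑ u ∈ S, ((K : ℝ) * (I u).card) ≤ K * T := by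
      rw [← Finset.mul_sum]
      have : (∑ u ∈ S, ((I u).card : ℝ)) ≤ T := by exact_mod_cast hsum
      exact mul_le_mul_of_nonneg_left this (by positivity)
    calc (S.card : ℝ) * ∑ u ∈ S, ((K : ℝ) * (I u).card)
        ≤ (2 * M) * (K * T) := by
          apply mul_le_mul h1 h2 (Finset.sum_nonneg fun u _ => by positivity) (by positivity)
      _ = 2 * K * T * M := by ring
  have : ∑ u ∈ S, Real.sqrt ((K : ℝ) * (I u).card) ≤ Real.sqrt (2 * K * T * M) := by
    rw [← Real.sqrt_sq (Finset.sum_nonneg fun u _ => Real.sqrt_nonneg _)]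
    exact Real.sqrt_le_sqrt (le_trans cs hbound)
  linarith
end

section
/- Let K, T, M ≥ 1 be integers and L ≥ 0 a real number. Let S be a finite index set with |S| ≤ 2M, and let (I_u)_{u∈S} be pairwise disjoint nonempty finite sets with ∑_{u∈S} |I_u| ≤ T. For each u ∈ S, let G_u ⊆ {1,…,K}, and for each k ∈ G_u let Δ_{k,u} and T_{k,u} be real numbers with Δ_{k,u} ≥ √(K/|I_u|) and 0 ≤ T_{k,u} ≤ L·Δ_{k,u}^{−2}. Then ∑_{u∈S} ∑_{k∈G_u} Δ_{k,u}·T_{k,u} ≤ L·√(2·K·T·M). -/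
set_option maxHeartbeats 1000000 in
/-- regret-accounting bound for large-gap arms (bound on R₂(T)). -/
theorem stmt_8 {ι β : Type*} (K T M : ℕ) (hK : 1 ≤ K) (hT : 1 ≤ T) (hM : 1 ≤ M)
    (L : ℝ) (hL : 0 ≤ L)
    (S : Finset ι) (hS : S.card ≤ 2 * M)
    (I : ι → Finset β) (hdisj : (S : Set ι).PairwiseDisjoint I)
    (hne : ∀ u ∈ S, (I u).Nonempty)
    (hsum : ∑ u ∈ S, (I u).card ≤ T)
    (G : ι → Finset ℕ) (hG : ∀ u ∈ S, G u ⊆ Finset.Icc 1 K)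
    (Δ Tk : ι → ℕ → ℝ)
    (hΔ : ∀ u ∈ S, ∀ k ∈ G u, Real.sqrt ((K : ℝ) / (I u).card) ≤ Δ u k)
    (hTk0 : ∀ u ∈ S, ∀ k ∈ G u, 0 ≤ Tk u k)
    (hTk : ∀ u ∈ S, ∀ k ∈ G u, Tk u k ≤ L / (Δ u k) ^ 2) :
    ∑ u ∈ S, ∑ k ∈ G u, Δ u k * Tk u k ≤ L * Real.sqrt (2 * K * T * M) := by
  have hK0 : (0:ℝ) < K := by exact_mod_cast hK
  -- Step 1: bound each inner sum by L * sqrt (K * |I u|)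
  have step1 : ∀ u ∈ S, ∑ k ∈ G u, Δ u k * Tk u k
      ≤ L * Real.sqrt ((K : ℝ) * (I u).card) := by
    intro u hu
    have hI0 : (0:ℝ) < (I u).card := by
      exact_mod_cast (hne u hu).card_pos
    have hsq : (0:ℝ) < Real.sqrt ((K:ℝ) / (I u).card) :=
      Real.sqrt_pos.2 (div_pos hK0 hI0)
    have hterm : ∀ k ∈ G u, Δ u k * Tk u k ≤ L * Real.sqrt ((I u).card / K) := by
      intro k hk
      have hΔpos : 0 < Δ u k := lt_of_lt_of_le hsq (hΔ u hu k hk)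
      have h1 : Δ u k * Tk u k ≤ Δ u k * (L / (Δ u k)^2) :=
        mul_le_mul_of_nonneg_left (hTk u hu k hk) hΔpos.le
      have h2 : Δ u k * (L / (Δ u k)^2) = L / Δ u k := by
        field_simp
      have h3 : L / Δ u k ≤ L / Real.sqrt ((K:ℝ) / (I u).card) :=
        div_le_div_of_nonneg_left hL hsq (hΔ u hu k hk)
      have h4 : L / Real.sqrt ((K:ℝ) / (I u).card) = L * Real.sqrt ((I u).card / K) := by
        rw [div_eq_mul_inv, ← Real.sqrt_inv]
        congr 2
        field_simp
      linarith [h1, h2 ▸ h1, h3, h4 ▸ h3]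
    calc ∑ k ∈ G u, Δ u k * Tk u k
        ≤ ∑ k ∈ G u, L * Real.sqrt ((I u).card / K) := Finset.sum_le_sum hterm
      _ = (G u).card * (L * Real.sqrt ((I u).card / K)) := by
          rw [Finset.sum_const, nsmul_eq_mul]
      _ ≤ K * (L * Real.sqrt ((I u).card / K)) := by
          apply mul_le_mul_of_nonneg_right
          · have := Finset.card_le_card (hG u hu)
            simp [Nat.card_Icc] at this
            exact_mod_cast this
          · positivity
      _ = L * ((K:ℝ) * Real.sqrt ((I u).card / K)) := by ring
      _ = L * Real.sqrt ((K : ℝ) * (I u).card) := by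
          congr 1
          rw [show (K:ℝ) = Real.sqrt ((K:ℝ)^2) by rw [Real.sqrt_sq hK0.le]]
          rw [← Real.sqrt_mul (by positivity)]
          congr 1
          field_simp
          rw [Real.sq_sqrt (by positivity)]
  -- Step 2: Cauchy-Schwarz
  have step2 : ∑ u ∈ S, Real.sqrt ((K : ℝ) * (I u).card)
      ≤ Real.sqrt (2 * K * T * M) := by
    have h := sq_sum_le_card_mul_sum_sq (s := S)
      (f := fun u => Real.sqrt ((K : ℝ) * (I u).card))
    have hsum' : ∑ u ∈ S, (Real.sqrt ((K : ℝ) * (I u).card))^2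
        = ∑ u ∈ S, (K : ℝ) * (I u).card := by
      apply Finset.sum_congr rfl
      intro u hu
      rw [Real.sq_sqrt (by positivity)]
    have hsumT : ∑ u ∈ S, (K : ℝ) * (I u).card ≤ (K:ℝ) * T := by
      rw [← Finset.mul_sum]
      apply mul_le_mul_of_nonneg_left _ hK0.le
      exact_mod_cast hsum
    have hb : (∑ u ∈ S, Real.sqrt ((K : ℝ) * (I u).card))^2 ≤ 2 * K * T * M := by
      calc (∑ u ∈ S, Real.sqrt ((K : ℝ) * (I u).card))^2
          ≤ (S.card : ℝ) * ∑ u ∈ S, (Real.sqrt ((K : ℝ) * (I u).card))^2 := h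
        _ ≤ (2 * M : ℝ) * ((K:ℝ) * T) := by
            apply mul_le_mul
            · exact_mod_cast hS
            · rw [hsum']; exact hsumT
            · rw [hsum']; positivity
            · positivity
        _ = 2 * K * T * M := by ring
    have := Real.sqrt_le_sqrt hb
    rwa [Real.sqrt_sq (Finset.sum_nonneg fun u _ => Real.sqrt_nonneg _)] at this
  calc ∑ u ∈ S, ∑ k ∈ G u, Δ u k * Tk u k
      ≤ ∑ u ∈ S, L * Real.sqrt ((K : ℝ) * (I u).card) := Finset.sum_le_sum step1
    _ = L * ∑ u ∈ S, Real.sqrt ((K : ℝ) * (I u).card) := by rw [Finset.mul_sum]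
    _ ≤ L * Real.sqrt (2 * K * T * M) := mul_le_mul_of_nonneg_left step2 hL
end

section
/- Let 0 < α ≤ 1, B > 0, and M ≥ 1 an integer. Let f : [0,1) → ℝ and let 0 = s₁ < s₂ < … < s_{M+1} = 1 be real numbers such that f is α-Hölder with constant 1 on each interval [s_m, s_{m+1}) for m ∈ {1,…,M}. Then there exist an integer N with N ≤ M + B^{−1/α} and real numbers 0 = ζ₁ < ζ₂ < … < ζ_{N+1} = 1 such that for every i ∈ {1,…,N} and all t, t' ∈ [ζ_i, ζ_{i+1}), |f(t) − f(t')| ≤ 2B. -/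
set_option maxHeartbeats 1000000 in


/-- a function piecewise α-Hölder (constant 1) on M intervals of
[0,1) admits a refined partition into at most M + B^{-1/α} intervals on each of
which its oscillation is at most 2B. -/
theorem stmt_11 (α : ℝ) (hα0 : 0 < α) (hα1 : α ≤ 1) (B : ℝ) (hB : 0 < B)
    (M : ℕ) (hM : 1 ≤ M) (f : ℝ → ℝ) (s : ℕ → ℝ)
    (hs1 : s 1 = 0) (hsM : s (M+1) = 1)
    (hsmono : ∀ m ∈ Finset.Icc 1 M, s m < s (m+1))
    (hf : ∀ m ∈ Finset.Icc 1 M, ∀ x ∈ Set.Ico (s m) (s (m+1)),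
      ∀ y ∈ Set.Ico (s m) (s (m+1)), |f x - f y| ≤ |x - y| ^ α) :
    ∃ (N : ℕ) (ζ : ℕ → ℝ), (N : ℝ) ≤ M + B ^ (-1/α) ∧
      ζ 1 = 0 ∧ ζ (N+1) = 1 ∧
      (∀ i ∈ Finset.Icc 1 N, ζ i < ζ (i+1)) ∧
      (∀ i ∈ Finset.Icc 1 N, ∀ t ∈ Set.Ico (ζ i) (ζ (i+1)),
        ∀ t' ∈ Set.Ico (ζ i) (ζ (i+1)), |f t - f t'| ≤ 2 * B) := by
  classical
  set δ : ℝ := B ^ (1/α) with hδdef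
  have hδ0 : 0 < δ := Real.rpow_pos_of_pos hB _
  set L : ℕ → ℝ := fun m => s (m+1) - s m with hLdef
  set k : ℕ → ℕ := fun m => ⌈L m / δ⌉₊ with hkdef
  set c : ℕ → ℕ := fun m => ∑ j ∈ Finset.Ico 1 m, k j with hcdef
  set N := c (M+1) with hNdef
  set mm : ℕ → ℕ := fun n => Nat.findGreatest (fun m => c m + 1 ≤ n) M with hmmdef
  set ζ : ℕ → ℝ := fun n =>
    s (mm n) + ((n - 1 - c (mm n) : ℕ) : ℝ) * (L (mm n) / (k (mm n))) with hζdef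
  -- Stage A : facts that need the definitions
  have hLeq : ∀ m : ℕ, L m = s (m+1) - s m := fun _ => rfl
  have hL : ∀ m, 1 ≤ m → m ≤ M → 0 < L m := fun m h1 h2 =>
    sub_pos.2 (hsmono m (Finset.mem_Icc.2 ⟨h1, h2⟩))
  have hk1 : ∀ m, 1 ≤ m → m ≤ M → 1 ≤ k m := fun m h1 h2 =>
    Nat.one_le_ceil_iff.2 (div_pos (hL m h1 h2) hδ0)
  have hkceil : ∀ m, 1 ≤ m → m ≤ M → (k m : ℝ) ≤ L m / δ + 1 := by
    intro m h1 h2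
    exact (Nat.ceil_lt_add_one (le_of_lt (div_pos (hL m h1 h2) hδ0))).le
  have hkub : ∀ m, 1 ≤ m → m ≤ M → L m ≤ (k m : ℝ) * δ := by
    intro m h1 h2
    have hle : L m / δ ≤ (k m : ℝ) := Nat.le_ceil _
    calc L m = L m / δ * δ := by field_simp
      _ ≤ (k m : ℝ) * δ := mul_le_mul_of_nonneg_right hle hδ0.le
  have hcsucc : ∀ m, 1 ≤ m → c (m+1) = c m + k m := fun m h1 =>
    Finset.sum_Ico_succ_top h1 k
  have hc1 : c 1 = 0 := by simp [hcdef]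
  have hcmono : Monotone c := fun a b hab =>
    Finset.sum_le_sum_of_subset (Finset.Ico_subset_Ico le_rfl hab)
  have hNsum : (N : ℝ) = ∑ j ∈ Finset.Ico 1 (M+1), (k j : ℝ) := by
    simp [hNdef, hcdef]
  have hsum1 : ∑ j ∈ Finset.Ico 1 (M+1), L j = 1 := by
    have h1 : ∑ j ∈ Finset.Ico 1 (M+1), L j
        = ∑ j ∈ Finset.range (M+1), L j - ∑ j ∈ Finset.range 1, L j :=
      Finset.sum_Ico_eq_sub L (by omega)
    have h2 : ∑ j ∈ Finset.range (M+1), (s (j+1) - s j) = s (M+1) - s 0 :=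
      Finset.sum_range_sub s (M+1)
    have h3 : ∑ j ∈ Finset.range 1, (s (j+1) - s j) = s 1 - s 0 :=
      Finset.sum_range_sub s 1
    simp only [hLdef] at h1 ⊢
    rw [h1, h2, h3, hsM, hs1]
    ring
  have hmm_le : ∀ n, mm n ≤ M := fun n => Nat.findGreatest_le M
  have hmm_ge : ∀ n, 1 ≤ n → 1 ≤ mm n := by
    intro n h1
    exact Nat.le_findGreatest hM (by omega : c 1 + 1 ≤ n)
  have hmm_spec : ∀ n, 1 ≤ n → c (mm n) + 1 ≤ n := by
    intro n h1
    exact Nat.findGreatest_spec (P := fun m => c m + 1 ≤ n) hM (by omega)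
  have hmm_great : ∀ n, mm n < M → n ≤ c (mm n + 1) := by
    intro n hlt
    have := Nat.findGreatest_is_greatest (P := fun m => c m + 1 ≤ n)
      (n := M) (k := mm n + 1) (Nat.lt_succ_self _) (by omega)
    omega
  have hmm_mono : ∀ n, mm n ≤ mm (n+1) :=
    fun n => Nat.findGreatest_mono (fun x hx => by omega) le_rfl
  have hmm_max : ∀ n m, m ≤ M → c m + 1 ≤ n → m ≤ mm n :=
    fun n m h1 h2 => Nat.le_findGreatest h1 h2
  have hζeq : ∀ n, ζ n =
      s (mm n) + ((n - 1 - c (mm n) : ℕ) : ℝ) * (L (mm n) / (k (mm n))) :=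
    fun _ => rfl
  -- make everything opaque
  clear_value ζ mm N c k L δ
  clear hζdef hmmdef hcdef hkdef hLdef hsmono
  -- Stage B : abstract reasoning
  have hstep : ∀ m, 1 ≤ m → m ≤ M → 0 < L m / k m ∧ L m / k m ≤ δ := by
    intro m h1 h2
    have hk0 : (0:ℝ) < (k m : ℝ) := by exact_mod_cast hk1 m h1 h2
    refine ⟨div_pos (hL m h1 h2) hk0, ?_⟩
    rw [div_le_iff₀ hk0]
    calc L m ≤ (k m : ℝ) * δ := hkub m h1 h2
      _ = δ * (k m : ℝ) := mul_comm _ _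
  have hkq : ∀ m, 1 ≤ m → m ≤ M → (k m : ℝ) * (L m / k m) = L m := by
    intro m h1 h2
    have hk0 : (k m : ℝ) ≠ 0 := by
      have := hk1 m h1 h2; positivity
    field_simp
  -- master structural lemma
  have hmaster : ∀ n, 1 ≤ n → n ≤ N + 1 →
      1 ≤ mm n ∧ mm n ≤ M ∧ c (mm n) + 1 ≤ n ∧ n ≤ c (mm n + 1) + 1 := by
    intro n h1 h2
    refine ⟨hmm_ge n h1, hmm_le n, hmm_spec n h1, ?_⟩
    by_cases hcase : mm n = M
    · have hNe : c (mm n + 1) = N := by rw [hcase, ← hNdef]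
      omega
    · have := hmm_great n (lt_of_le_of_ne (hmm_le n) hcase)
      omega
  -- key per-step lemma
  have hkey : ∀ n, 1 ≤ n → n ≤ N →
      s (mm n) ≤ ζ n ∧ ζ n < ζ (n+1) ∧ ζ (n+1) ≤ s (mm n + 1) ∧ ζ (n+1) - ζ n ≤ δ := by
    intro n h1 h2
    obtain ⟨hm1, hmM, hcm, hcm'⟩ := hmaster n h1 (by omega)
    obtain ⟨hm1', hmM', hdm, hdm'⟩ := hmaster (n+1) (by omega) (by omega)
    have hmm' : mm n ≤ mm (n+1) := hmm_mono n
    have hcsm : c (mm n + 1) = c (mm n) + k (mm n) := hcsucc (mm n) hm1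
    have hq := hstep (mm n) hm1 hmM
    have hkqm := hkq (mm n) hm1 hmM
    have hsm1 : s (mm n + 1) = s (mm n) + L (mm n) := by
      rw [hLeq (mm n)]; ring
    have hζn : ζ n = s (mm n) + ((n - 1 - c (mm n) : ℕ) : ℝ) * (L (mm n) / k (mm n)) :=
      hζeq n
    have hζnge : s (mm n) ≤ ζ n := by
      have h0 : 0 ≤ ((n - 1 - c (mm n) : ℕ) : ℝ) * (L (mm n) / k (mm n)) :=
        mul_nonneg (Nat.cast_nonneg _) hq.1.le
      linarith [hζn]
    by_cases hcase : mm (n+1) = mm n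
    · -- same interval
      have hIk : (n - 1 - c (mm n)) + 1 ≤ k (mm n) := by
        rw [hcase] at hdm'
        omega
      have hIcast : ((n + 1 - 1 - c (mm n) : ℕ) : ℝ)
          = ((n - 1 - c (mm n) : ℕ) : ℝ) + 1 := by
        have : (n + 1 - 1 - c (mm n)) = (n - 1 - c (mm n)) + 1 := by omega
        rw [this]; push_cast; ring
      have hζn1 : ζ (n+1) = s (mm n)
          + (((n - 1 - c (mm n) : ℕ) : ℝ) + 1) * (L (mm n) / k (mm n)) := by
        rw [hζeq (n+1), hcase, hIcast]
      have hdiff : ζ (n+1) = ζ n + L (mm n) / k (mm n) := by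
        rw [hζn1, hζn]; ring
      have hIkR : ((n - 1 - c (mm n) : ℕ) : ℝ) + 1 ≤ (k (mm n) : ℝ) := by
        exact_mod_cast hIk
      have hle2 : (((n - 1 - c (mm n) : ℕ) : ℝ) + 1) * (L (mm n) / k (mm n))
          ≤ (k (mm n) : ℝ) * (L (mm n) / k (mm n)) :=
        mul_le_mul_of_nonneg_right hIkR hq.1.le
      refine ⟨hζnge, by linarith [hdiff, hq.1], ?_, by linarith [hdiff, hq.2]⟩
      rw [hζn1, hsm1]
      linarith [hkqm ▸ hle2]
    · -- next interval starts
      have hmlt : mm n < mm (n+1) := lt_of_le_of_ne hmm' (Ne.symm hcase)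
      have hmltM : mm n < M := by omega
      have hng : n ≤ c (mm n + 1) := hmm_great n hmltM
      have hcm'le : c (mm (n+1)) ≤ n := by omega
      have hcmono1 : c (mm n + 1) ≤ c (mm (n+1)) := hcmono (by omega)
      have hcm'eq : c (mm (n+1)) = n := by omega
      have hcn : c (mm n + 1) = n := by omega
      have hm'eq : mm (n+1) = mm n + 1 := by
        by_contra hne
        have h2m : mm n + 2 ≤ mm (n+1) := by omega
        have hA : c (mm n + 2) = c (mm n + 1) + k (mm n + 1) :=
          hcsucc (mm n + 1) (by omega)
        have hB2 : c (mm n + 2) ≤ c (mm (n+1)) := hcmono (by omega)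
        have hk' : 1 ≤ k (mm n + 1) := hk1 (mm n + 1) (by omega) (by omega)
        omega
      have hIeq : n - 1 - c (mm n) = k (mm n) - 1 := by omega
      have hk1m := hk1 (mm n) hm1 hmM
      have hIcast : ((n - 1 - c (mm n) : ℕ) : ℝ) = (k (mm n) : ℝ) - 1 := by
        rw [hIeq]
        have : ((k (mm n) - 1 : ℕ) : ℝ) = (k (mm n) : ℝ) - 1 := by
          push_cast [hk1m]; ring
        exact this
      have hζn1 : ζ (n+1) = s (mm n + 1) := by
        have hi0 : (n + 1 - 1 - c (mm (n+1))) = 0 := by omega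
        rw [hζeq (n+1), hi0, hm'eq]
        simp
      have hζnval : ζ n = s (mm n) + ((k (mm n) : ℝ) - 1) * (L (mm n) / k (mm n)) := by
        rw [hζn, hIcast]
      refine ⟨hζnge, ?_, le_of_eq hζn1, ?_⟩
      · rw [hζn1, hζnval, hsm1]
        nlinarith [hq.1, hkqm]
      · rw [hζn1, hζnval, hsm1]
        nlinarith [hq.2, hkqm]
  -- endpoint: ζ 1 = 0
  have hζ1 : ζ 1 = 0 := by
    have hmm1 : mm 1 = 1 := by
      have hg := hmm_ge 1 le_rfl
      have hsp := hmm_spec 1 le_rfl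
      by_contra hne
      have h2 : 2 ≤ mm 1 := by omega
      have hc2 : c 2 = c 1 + k 1 := hcsucc 1 le_rfl
      have := hcmono h2
      have := hk1 1 le_rfl hM
      omega
    have hi0 : (1 - 1 - c (mm 1) : ℕ) = 0 := by omega
    rw [hζeq 1, hi0, hmm1, hs1]
    simp
  -- endpoint: ζ (N+1) = 1
  have hζN : ζ (N+1) = 1 := by
    have hcMN : c M + k M = N := by
      have := hcsucc M hM
      omega
    have hkM := hk1 M hM le_rfl
    have hmmN : mm (N+1) = M :=
      le_antisymm (hmm_le _) (hmm_max (N+1) M le_rfl (by omega))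
    have hi : (N + 1 - 1 - c (mm (N+1))) = k M := by
      rw [hmmN]; omega
    rw [hζeq (N+1), hi, hmmN, hkq M hM le_rfl, hLeq M, hsM]
    ring
  -- count bound
  have hcount : (N : ℝ) ≤ M + B ^ (-1/α) := by
    have hterm : ∀ j ∈ Finset.Ico 1 (M+1), (k j : ℝ) ≤ L j / δ + 1 := by
      intro j hj
      rw [Finset.mem_Ico] at hj
      exact hkceil j hj.1 (by omega)
    have hcard : (Finset.Ico 1 (M+1)).card = M := by simp
    have hsle : (N : ℝ) ≤ ∑ j ∈ Finset.Ico 1 (M+1), (L j / δ + 1) := by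
      rw [hNsum]; exact Finset.sum_le_sum hterm
    rw [Finset.sum_add_distrib, ← Finset.sum_div, hsum1, Finset.sum_const, hcard,
      nsmul_eq_mul, mul_one] at hsle
    have hδinv : 1 / δ = B ^ (-1/α) := by
      rw [hδdef, one_div, ← Real.rpow_neg hB.le, neg_div]
    linarith [hδinv ▸ hsle]
  -- oscillation bound
  have hosc : ∀ i ∈ Finset.Icc 1 N, ∀ t ∈ Set.Ico (ζ i) (ζ (i+1)),
      ∀ t' ∈ Set.Ico (ζ i) (ζ (i+1)), |f t - f t'| ≤ 2 * B := by
    intro i hi t ht t' ht'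
    rw [Finset.mem_Icc] at hi
    obtain ⟨hge, hlt, hle, hdiff⟩ := hkey i hi.1 hi.2
    obtain ⟨hm1, hmM, _, _⟩ := hmaster i hi.1 (by omega)
    have htmem : t ∈ Set.Ico (s (mm i)) (s (mm i + 1)) :=
      ⟨le_trans hge ht.1, lt_of_lt_of_le ht.2 hle⟩
    have htmem' : t' ∈ Set.Ico (s (mm i)) (s (mm i + 1)) :=
      ⟨le_trans hge ht'.1, lt_of_lt_of_le ht'.2 hle⟩
    have hftt : |f t - f t'| ≤ |t - t'| ^ α :=
      hf (mm i) (Finset.mem_Icc.2 ⟨hm1, hmM⟩) t htmem t' htmem'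
    have habs : |t - t'| ≤ δ := by
      rw [abs_sub_le_iff]
      have h1 := ht.1; have h2 := ht.2; have h3 := ht'.1; have h4 := ht'.2
      constructor <;> linarith
    have hpow : |t - t'| ^ α ≤ δ ^ α :=
      Real.rpow_le_rpow (abs_nonneg _) habs hα0.le
    have hδα : δ ^ α = B := by
      rw [hδdef, ← Real.rpow_mul hB.le, one_div_mul_cancel (ne_of_gt hα0),
        Real.rpow_one]
    calc |f t - f t'| ≤ |t - t'| ^ α := hftt
      _ ≤ δ ^ α := hpow
      _ = B := hδα
      _ ≤ 2 * B := by linarith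
  exact ⟨N, ζ, hcount, hζ1, hζN, fun i hi => by
    rw [Finset.mem_Icc] at hi
    exact (hkey i hi.1 hi.2).2.1, hosc⟩
end

section
/- Let 0 < α ≤ 1, B > 0, and K, M ≥ 1 integers. Let f₁, …, f_K : [0,1) → ℝ and let 0 = s₁ < s₂ < … < s_{M+1} = 1 be real numbers such that every f_k is α-Hölder with constant 1 on each interval [s_m, s_{m+1}) for m ∈ {1,…,M}. Then there exist an integer N with N ≤ M + K·B^{−1/α} and real numbers 0 = ζ₁ < ζ₂ < … < ζ_{N+1} = 1 such that for every k ∈ {1,…,K}, every i ∈ {1,…,N}, and all t, t' ∈ [ζ_i, ζ_{i+1}), |f_k(t) − f_k(t')| ≤ 2B. -/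
/-- K functions, each piecewise α-Hölder (constant 1) on a common
partition of [0,1) into M intervals, admit a common refinement into at most
M + K·B^{-1/α} intervals on each of which every function's oscillation is ≤ 2B. -/
theorem stmt_12 (α : ℝ) (hα0 : 0 < α) (hα1 : α ≤ 1) (B : ℝ) (hB : 0 < B)
    (K M : ℕ) (hK : 1 ≤ K) (hM : 1 ≤ M) (f : ℕ → ℝ → ℝ) (s : ℕ → ℝ)
    (hs1 : s 1 = 0) (hsM : s (M+1) = 1)
    (hsmono : ∀ m ∈ Finset.Icc 1 M, s m < s (m+1))
    (hf : ∀ k ∈ Finset.Icc 1 K, ∀ m ∈ Finset.Icc 1 M, ∀ x ∈ Set.Ico (s m) (s (m+1)),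
      ∀ y ∈ Set.Ico (s m) (s (m+1)), |f k x - f k y| ≤ |x - y| ^ α) :
    ∃ (N : ℕ) (ζ : ℕ → ℝ), (N : ℝ) ≤ M + K * B ^ (-1/α) ∧
      ζ 1 = 0 ∧ ζ (N+1) = 1 ∧
      (∀ i ∈ Finset.Icc 1 N, ζ i < ζ (i+1)) ∧
      (∀ k ∈ Finset.Icc 1 K, ∀ i ∈ Finset.Icc 1 N, ∀ t ∈ Set.Ico (ζ i) (ζ (i+1)),
        ∀ t' ∈ Set.Ico (ζ i) (ζ (i+1)), |f k t - f k t'| ≤ 2 * B) := by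
  classical
  set δ : ℝ := B ^ ((1:ℝ)/α) with hδdef
  have hδ : 0 < δ := Real.rpow_pos_of_pos hB _
  set len : ℕ → ℝ := fun m => s (m+1) - s m with hlen
  set n : ℕ → ℕ := fun m => ⌈len m / δ⌉₊ with hn
  set P : ℕ → ℕ := fun m => ∑ j ∈ Finset.Icc 1 m, n j with hP
  have hlenpos : ∀ m, 1 ≤ m → m ≤ M → 0 < len m := by
    intro m h1 h2
    have := hsmono m (Finset.mem_Icc.mpr ⟨h1, h2⟩)
    simp only [hlen]; linarith
  have hnpos : ∀ m, 1 ≤ m → m ≤ M → 1 ≤ n m := by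
    intro m h1 h2
    have : (0:ℝ) < len m / δ := div_pos (hlenpos m h1 h2) hδ
    exact Nat.one_le_ceil_iff.mpr this
  have hP0 : P 0 = 0 := by simp [hP]
  have hPsucc : ∀ m, 1 ≤ m → P m = P (m-1) + n m := by
    intro m h1
    obtain ⟨m', rfl⟩ := Nat.exists_eq_add_of_le h1
    simp only [hP]
    rw [show 1 + m' = m' + 1 by ring, Finset.sum_Icc_succ_top (by omega)]
    simp
  have hPmono : Monotone P := by
    intro a b hab
    exact Finset.sum_le_sum_of_subset (Finset.Icc_subset_Icc_right hab)
  set N := P M with hN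
  have hN1 : 1 ≤ N := by
    have h1 : P 1 ≤ P M := hPmono hM
    have := hPsucc 1 le_rfl
    have := hnpos 1 le_rfl hM
    omega
  set ζ : ℕ → ℝ := fun i =>
    if h : ∃ m, 1 ≤ m ∧ m ≤ M ∧ i ≤ P m then
      s (Nat.find h) + ((i:ℝ) - 1 - (P (Nat.find h - 1) : ℕ)) *
        (len (Nat.find h) / (n (Nat.find h) : ℝ))
    else 1 with hζ
  have hζeq : ∀ m i, 1 ≤ m → m ≤ M → P (m-1) < i → i ≤ P m →
      ζ i = s m + ((i:ℝ) - 1 - (P (m-1) : ℕ)) * (len m / (n m : ℝ)) := by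
    intro m i hm1 hmM hlo hhi
    have hex : ∃ m', 1 ≤ m' ∧ m' ≤ M ∧ i ≤ P m' := ⟨m, hm1, hmM, hhi⟩
    have hfind : Nat.find hex = m := by
      apply le_antisymm (Nat.find_le ⟨hm1, hmM, hhi⟩)
      by_contra hlt
      push_neg at hlt
      obtain ⟨h1, h2, h3⟩ := Nat.find_spec hex
      have : P (Nat.find hex) ≤ P (m-1) := hPmono (by omega)
      omega
    simp only [hζ, dif_pos hex, hfind]
  have hζtop : ∀ i, N < i → ζ i = 1 := by
    intro i hi
    have hne : ¬ ∃ m', 1 ≤ m' ∧ m' ≤ M ∧ i ≤ P m' := by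
      rintro ⟨m', h1, h2, h3⟩
      have : P m' ≤ P M := hPmono h2
      omega
    simp only [hζ, dif_neg hne]
  -- block structure
  have hblock : ∀ i, 1 ≤ i → i ≤ N → ∃ m, 1 ≤ m ∧ m ≤ M ∧
      s m ≤ ζ i ∧ ζ (i+1) ≤ s (m+1) ∧ ζ (i+1) = ζ i + len m / (n m : ℝ) := by
    intro i hi1 hiN
    obtain ⟨m, hm1, hmM, hile, hlo⟩ : ∃ m, 1 ≤ m ∧ m ≤ M ∧ i ≤ P m ∧ P (m-1) < i := by
      have hex : ∃ m', 1 ≤ m' ∧ m' ≤ M ∧ i ≤ P m' := ⟨M, hM, le_refl _, hiN⟩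
      obtain ⟨hm1, hmM, hile⟩ := Nat.find_spec hex
      refine ⟨Nat.find hex, hm1, hmM, hile, ?_⟩
      rcases Nat.eq_or_lt_of_le hm1 with h | h
      · rw [← h]; simp [hP0]; omega
      · have hnm : ¬ (1 ≤ Nat.find hex - 1 ∧ Nat.find hex - 1 ≤ M ∧ i ≤ P (Nat.find hex - 1)) :=
          Nat.find_min hex (by omega)
        push_neg at hnm
        exact hnm (by omega) (by omega)
    have hnmpos : (0:ℝ) < (n m : ℝ) := by exact_mod_cast hnpos m hm1 hmM
    have hq : (0:ℝ) < len m / (n m : ℝ) := div_pos (hlenpos m hm1 hmM) hnmpos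
    have hnq : ((n m : ℝ)) * (len m / (n m : ℝ)) = len m := by field_simp
    have hζi : ζ i = s m + ((i:ℝ) - 1 - (P (m-1) : ℕ)) * (len m / (n m : ℝ)) :=
      hζeq m i hm1 hmM hlo hile
    have hPm : P m = P (m-1) + n m := hPsucc m hm1
    have hζi1 : ζ (i+1) = s m + ((i:ℝ) - (P (m-1) : ℕ)) * (len m / (n m : ℝ)) := by
      rcases Nat.lt_or_ge i (P m) with hlt | hge
      · rw [hζeq m (i+1) hm1 hmM (by omega) (by omega)]
        push_cast; ring_nf
      · have hiPm : i = P m := le_antisymm hile hge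
        have hval : ((i:ℝ) - (P (m-1):ℕ)) * (len m / (n m : ℝ)) = len m := by
          rw [hiPm, hPm]
          push_cast
          rw [show ((P (m-1):ℝ) + (n m:ℝ) - (P (m-1):ℝ)) = (n m : ℝ) by ring]
          exact hnq
        rw [hval]
        rcases Nat.lt_or_ge m M with hmlt | hmge
        · have hPm1 : P (m+1) = P m + n (m+1) := by
            have := hPsucc (m+1) (by omega)
            simpa using this
          have hnext := hζeq (m+1) (i+1) (by omega) (by omega)
            (by simp only [Nat.add_sub_cancel]; omega)
            (by have := hnpos (m+1) (by omega) (by omega); omega)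
          simp only [Nat.add_sub_cancel] at hnext
          rw [hnext, hiPm]
          push_cast
          simp only [hlen]
          ring
        · have hmm : m = M := le_antisymm hmM hmge
          have h1 : ζ (i+1) = 1 := hζtop (i+1) (by rw [hN, ← hmm, ← hiPm]; omega)
          rw [h1, hmm]
          simp only [hlen, hsM]
          ring
    have hoff : (0:ℝ) ≤ ((i:ℝ) - 1 - (P (m-1) : ℕ)) := by
      have : (P (m-1) : ℝ) + 1 ≤ i := by exact_mod_cast hlo
      linarith
    have hoffhi : ((i:ℝ) - (P (m-1) : ℕ)) ≤ (n m : ℝ) := by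
      have : (i:ℝ) ≤ (P m : ℕ) := by exact_mod_cast hile
      have h2 : ((P m : ℕ) : ℝ) = (P (m-1) : ℕ) + (n m : ℕ) := by exact_mod_cast hPm
      push_cast at h2 ⊢
      linarith
    refine ⟨m, hm1, hmM, ?_, ?_, ?_⟩
    · rw [hζi]; nlinarith
    · rw [hζi1]
      have : ((i:ℝ) - (P (m-1) : ℕ)) * (len m / (n m : ℝ)) ≤ (n m : ℝ) * (len m / (n m : ℝ)) := by
        apply mul_le_mul_of_nonneg_right hoffhi hq.le
      rw [hnq] at this
      simp only [hlen] at this ⊢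
      linarith
    · rw [hζi, hζi1]; ring
  -- gap bound : len m / n m ≤ δ
  have hgap : ∀ m, 1 ≤ m → m ≤ M → len m / (n m : ℝ) ≤ δ := by
    intro m h1 h2
    have hnmpos : (0:ℝ) < (n m : ℝ) := by exact_mod_cast hnpos m h1 h2
    rw [div_le_iff₀ hnmpos]
    have hceil : len m / δ ≤ (n m : ℝ) := Nat.le_ceil _
    calc len m = (len m / δ) * δ := by field_simp
    _ ≤ (n m : ℝ) * δ := by nlinarith
    _ = δ * (n m : ℝ) := by ring
  have hδα : δ ^ α = B := by
    rw [hδdef, ← Real.rpow_mul hB.le, one_div_mul_cancel hα0.ne', Real.rpow_one]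
  -- telescoping sum
  have htel : ∀ q, ∑ m ∈ Finset.Icc 1 q, (s (m+1) - s m) = s (q+1) - s 1 := by
    intro q
    induction q with
    | zero => simp
    | succ q ih => rw [Finset.sum_Icc_succ_top (by omega), ih]; ring
  have htot : ∑ m ∈ Finset.Icc 1 M, len m = 1 := by
    simp only [hlen]
    rw [htel M, hsM, hs1]; ring
  have hinv : 1/δ = B ^ (-1/α) := by
    rw [hδdef, show (-1/α : ℝ) = -(1/α) by ring, Real.rpow_neg hB.le, one_div]
  refine ⟨N, ζ, ?_, ?_, ?_, ?_, ?_⟩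
  · -- cardinality bound
    have h1 : (N:ℝ) = ∑ m ∈ Finset.Icc 1 M, (n m : ℝ) := by
      rw [hN]; simp only [hP]; push_cast; ring
    have h2 : (N:ℝ) ≤ ∑ m ∈ Finset.Icc 1 M, (len m / δ + 1) := by
      rw [h1]
      apply Finset.sum_le_sum
      intro m hm
      obtain ⟨hm1, hmM⟩ := Finset.mem_Icc.mp hm
      have h0 : 0 ≤ len m / δ := (div_pos (hlenpos m hm1 hmM) hδ).le
      exact (Nat.ceil_lt_add_one h0).le
    have h3 : ∑ m ∈ Finset.Icc 1 M, (len m / δ + 1)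
        = (∑ m ∈ Finset.Icc 1 M, len m) / δ + M := by
      rw [Finset.sum_add_distrib, ← Finset.sum_div, Finset.sum_const, Nat.card_Icc]
      simp
    have hKB : 1/δ ≤ (K:ℝ) * B ^ (-1/α) := by
      rw [← hinv]
      have hK1 : (1:ℝ) ≤ (K:ℝ) := by exact_mod_cast hK
      have hd : 0 ≤ 1/δ := by positivity
      nlinarith
    rw [h3, htot] at h2
    linarith
  · -- ζ 1 = 0
    have hP1 : P 1 = n 1 := by have := hPsucc 1 le_rfl; simpa [hP0] using this
    have := hζeq 1 1 le_rfl hM (by simp [hP0]) (by rw [hP1]; exact hnpos 1 le_rfl hM)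
    rw [this, hP0, hs1]
    simp
  · exact hζtop (N+1) (by omega)
  · -- strict monotonicity
    intro i hi
    obtain ⟨hi1, hiN⟩ := Finset.mem_Icc.mp hi
    obtain ⟨m, hm1, hmM, _, _, heq⟩ := hblock i hi1 hiN
    have hnmpos : (0:ℝ) < (n m : ℝ) := by exact_mod_cast hnpos m hm1 hmM
    have hq : (0:ℝ) < len m / (n m : ℝ) := div_pos (hlenpos m hm1 hmM) hnmpos
    rw [heq]; linarith
  · -- oscillation bound
    intro k hk i hi t ht t' ht'
    obtain ⟨hi1, hiN⟩ := Finset.mem_Icc.mp hi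
    obtain ⟨m, hm1, hmM, hsl, hsr, heq⟩ := hblock i hi1 hiN
    obtain ⟨ht1, ht2⟩ := ht
    obtain ⟨ht1', ht2'⟩ := ht'
    have hmem : t ∈ Set.Ico (s m) (s (m+1)) := ⟨le_trans hsl ht1, lt_of_lt_of_le ht2 hsr⟩
    have hmem' : t' ∈ Set.Ico (s m) (s (m+1)) := ⟨le_trans hsl ht1', lt_of_lt_of_le ht2' hsr⟩
    have hbnd := hf k hk m (Finset.mem_Icc.mpr ⟨hm1, hmM⟩) t hmem t' hmem'
    have habs : |t - t'| ≤ δ := by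
      have h1 : len m / (n m : ℝ) ≤ δ := hgap m hm1 hmM
      rw [heq] at ht2 ht2'
      rw [abs_le]
      constructor <;> linarith
    calc |f k t - f k t'| ≤ |t - t'| ^ α := hbnd
    _ ≤ δ ^ α := Real.rpow_le_rpow (abs_nonneg _) habs hα0.le
    _ = B := hδα
    _ ≤ 2 * B := by linarith
end

section
/- Let T ≥ 1 be an integer, let c ≥ T^{−1/2}, let υ ≥ 1 be an integer, and let g : {1,…,T} → ℝ with 0 ≤ g(t) ≤ 1 for all t. Suppose {1,…,T} can be partitioned into υ consecutive intervals on each of which g is monotone. Then there exist an integer N ≤ υ·(⌊log₂(√T)⌋ + 1) and integers 1 = j₁ < j₂ < … < j_{N+1} = T + 1 refining that partition such that for each i ∈ {1,…,N}, either g(t) ≤ 2c for all t ∈ {j_i, …, j_{i+1} − 1}, or max_{j_i ≤ t < j_{i+1}} g(t) ≤ 2·min_{j_i ≤ t < j_{i+1}} g(t). -/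
private lemma factor_two {u v : ℝ} (hu : 0 < u) (hv : 0 < v) (hu1 : u ≤ 1) (hv1 : v ≤ 1)
    (h : ⌊Real.logb 2 u⁻¹⌋₊ = ⌊Real.logb 2 v⁻¹⌋₊) : u ≤ 2 * v := by
  set n := ⌊Real.logb 2 u⁻¹⌋₊ with hn
  have hlu0 : 0 ≤ Real.logb 2 u⁻¹ :=
    Real.logb_nonneg (by norm_num) (one_le_inv_iff₀.2 ⟨hu, hu1⟩)
  have h1 : (n:ℝ) ≤ Real.logb 2 u⁻¹ := Nat.floor_le hlu0
  have h2 : Real.logb 2 v⁻¹ < (n:ℝ) + 1 := by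
    have := Nat.lt_floor_add_one (Real.logb 2 v⁻¹)
    rw [← h] at this; exact_mod_cast this
  have hui : (2:ℝ) ^ (n:ℝ) ≤ u⁻¹ := by
    calc (2:ℝ) ^ (n:ℝ) ≤ 2 ^ Real.logb 2 u⁻¹ :=
        (Real.rpow_le_rpow_left_iff (by norm_num)).2 h1
      _ = u⁻¹ := Real.rpow_logb (by norm_num) (by norm_num) (inv_pos.2 hu)
  have hvi : v⁻¹ < 2 * (2:ℝ) ^ (n:ℝ) := by
    calc v⁻¹ = 2 ^ Real.logb 2 v⁻¹ :=
        (Real.rpow_logb (by norm_num) (by norm_num) (inv_pos.2 hv)).symm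
      _ < 2 ^ ((n:ℝ) + 1) := (Real.rpow_lt_rpow_left_iff (by norm_num)).2 h2
      _ = 2 * (2:ℝ) ^ (n:ℝ) := by
          rw [Real.rpow_add (by norm_num), Real.rpow_one]; ring
  have hkey : v⁻¹ < 2 * u⁻¹ := lt_of_lt_of_le hvi (by nlinarith)
  have h3 : 1 < 2 * u⁻¹ * v := by
    have := (inv_lt_iff_one_lt_mul₀ hv).1 hkey
    linarith [this]
  have h4 := mul_lt_mul_of_pos_left h3 hu
  rw [mul_one] at h4
  have h5 : u < 2 * v := by
    calc u < u * (2 * u⁻¹ * v) := h4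
      _ = 2 * v := by field_simp
  exact le_of_lt h5

private lemma bucket_le {T : ℕ} (hT : 1 ≤ T) {c v : ℝ} (hc : (T:ℝ) ^ (-(1:ℝ)/2) ≤ c)
    (hv1 : v ≤ 1) (hv : 2*c < v) : ⌊Real.logb 2 v⁻¹⌋₊ + 1 ≤ ⌊Real.logb 2 (Real.sqrt T)⌋₊ := by
  have hT0 : (0:ℝ) < T := by exact_mod_cast hT
  have hst : 0 < Real.sqrt T := Real.sqrt_pos.2 hT0
  have hcs : (Real.sqrt T)⁻¹ ≤ c := by
    rwa [show (-(1:ℝ)/2) = -(1/2) by ring, Real.rpow_neg hT0.le, ← Real.sqrt_eq_rpow] at hc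
  have hc0 : 0 < c := lt_of_lt_of_le (inv_pos.2 hst) hcs
  have hv0 : 0 < v := lt_trans (by linarith) hv
  have h2v : 2 / Real.sqrt T < v := by
    calc 2 / Real.sqrt T = 2 * (Real.sqrt T)⁻¹ := by ring
      _ ≤ 2 * c := by linarith
      _ < v := hv
  have hvi : v⁻¹ < Real.sqrt T / 2 := by
    have h20 : 0 < 2 / Real.sqrt T := by positivity
    have := (inv_lt_inv₀ hv0 h20).2 h2v
    rwa [inv_div] at this
  have hlb : Real.logb 2 v⁻¹ < Real.logb 2 (Real.sqrt T / 2) :=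
    Real.logb_lt_logb (by norm_num) (inv_pos.2 hv0) hvi
  have heq : Real.logb 2 (Real.sqrt T / 2) = Real.logb 2 (Real.sqrt T) - 1 := by
    rw [Real.logb_div (ne_of_gt hst) (by norm_num), Real.logb_self_eq_one (by norm_num)]
  set n := ⌊Real.logb 2 v⁻¹⌋₊ with hn
  have h1 : (n:ℝ) ≤ Real.logb 2 v⁻¹ :=
    Nat.floor_le (Real.logb_nonneg (by norm_num) (one_le_inv_iff₀.2 ⟨hv0, hv1⟩))
  have : ((n+1 : ℕ):ℝ) ≤ Real.logb 2 (Real.sqrt T) := by push_cast; linarith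
  exact Nat.le_floor this

private lemma pstrict {p : ℕ → ℕ} {υ : ℕ} (h : ∀ m ∈ Finset.Icc 1 υ, p m < p (m+1)) :
    ∀ a b, 1 ≤ a → a < b → b ≤ υ + 1 → p a < p b := by
  intro a b ha hab hb
  induction b with
  | zero => omega
  | succ n ih =>
    rcases Nat.lt_succ_iff_lt_or_eq.mp hab with h' | h'
    · exact lt_trans (ih h' (by omega)) (h n (Finset.mem_Icc.2 ⟨by omega, by omega⟩))
    · subst h'; exact h a (Finset.mem_Icc.2 ⟨ha, by omega⟩)

/-- a [0,1]-valued function on {1,…,T} that is piecewise monotone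
on υ consecutive intervals admits a refinement of that partition into at most
υ·(⌊log₂ √T⌋ + 1) consecutive blocks on each of which the function either stays
below 2c or varies by at most a multiplicative factor of 2. -/
theorem stmt_14 (T : ℕ) (hT : 1 ≤ T) (c : ℝ) (hc : (T:ℝ) ^ (-(1:ℝ)/2) ≤ c)
    (υ : ℕ) (hυ : 1 ≤ υ)
    (g : ℕ → ℝ) (hg : ∀ t ∈ Finset.Icc 1 T, 0 ≤ g t ∧ g t ≤ 1)
    (p : ℕ → ℕ) (hp1 : p 1 = 1) (hpend : p (υ+1) = T + 1)
    (hpmono : ∀ m ∈ Finset.Icc 1 υ, p m < p (m+1))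
    (hmono : ∀ m ∈ Finset.Icc 1 υ,
      MonotoneOn g (Set.Ico (p m) (p (m+1))) ∨ AntitoneOn g (Set.Ico (p m) (p (m+1)))) :
    ∃ (N : ℕ) (j : ℕ → ℕ),
      N ≤ υ * (Nat.floor (Real.logb 2 (Real.sqrt T)) + 1) ∧
      j 1 = 1 ∧ j (N+1) = T + 1 ∧
      (∀ i ∈ Finset.Icc 1 N, j i < j (i+1)) ∧
      (∀ m ∈ Finset.Icc 1 (υ+1), ∃ i ∈ Finset.Icc 1 (N+1), j i = p m) ∧
      (∀ i ∈ Finset.Icc 1 N,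
        (∀ t ∈ Finset.Ico (j i) (j (i+1)), g t ≤ 2 * c) ∨
        (∀ t ∈ Finset.Ico (j i) (j (i+1)), ∀ t' ∈ Finset.Ico (j i) (j (i+1)),
          g t ≤ 2 * g t')) := by
  classical
  set L := Nat.floor (Real.logb 2 (Real.sqrt T)) + 1 with hLdef
  have hL1 : 1 ≤ L := by omega
  -- basic positivity
  have hT0 : (0:ℝ) < T := by exact_mod_cast hT
  have hc0 : 0 < c := lt_of_lt_of_le (Real.rpow_pos_of_pos hT0 _) hc
  -- monotonicity of p over the whole range
  have hps : ∀ a b, 1 ≤ a → a < b → b ≤ υ + 1 → p a < p b := pstrict hpmono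
  have hple : ∀ a b, 1 ≤ a → a ≤ b → b ≤ υ + 1 → p a ≤ p b := by
    intro a b ha hab hb
    rcases eq_or_lt_of_le hab with rfl | h
    · exact le_refl _
    · exact le_of_lt (hps a b ha h hb)
  have hpge1 : ∀ m, 1 ≤ m → m ≤ υ + 1 → 1 ≤ p m := by
    intro m h1 h2; have := hple 1 m le_rfl h1 h2; omega
  have hpleT : ∀ m, 1 ≤ m → m ≤ υ + 1 → p m ≤ T + 1 := by
    intro m h1 h2; have := hple m (υ+1) h1 h2 le_rfl; omega
  -- the level function
  set ℓ : ℕ → ℕ := fun t => if g t ≤ 2*c then L else ⌊Real.logb 2 (g t)⁻¹⌋₊ + 1 with hℓdef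
  have hℓub : ∀ t ∈ Finset.Icc 1 T, ¬ (g t ≤ 2*c) → ℓ t ≤ L - 1 := by
    intro t ht h
    have := bucket_le hT hc (hg t ht).2 (not_le.1 h)
    simp only [hℓdef, if_neg h]
    omega
  have hℓle : ∀ t ∈ Finset.Icc 1 T, ℓ t ≤ L := by
    intro t ht
    by_cases h : g t ≤ 2*c
    · simp [hℓdef, h]
    · have := hℓub t ht h; omega
  have hℓge : ∀ t, 1 ≤ ℓ t := by
    intro t; by_cases h : g t ≤ 2*c <;> simp [hℓdef, h, hL1]
  -- level is antitone in the value of g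
  have hmono_ℓ : ∀ t t', t ∈ Finset.Icc 1 T → t' ∈ Finset.Icc 1 T → g t ≤ g t' → ℓ t' ≤ ℓ t := by
    intro t t' ht ht' hle
    by_cases h2 : g t' ≤ 2*c
    · have h1 : g t ≤ 2*c := le_trans hle h2
      simp [hℓdef, h1, h2]
    · have hub := hℓub t' ht' h2
      by_cases h1 : g t ≤ 2*c
      · have : ℓ t = L := by simp [hℓdef, h1]
        omega
      · have hgt0 : 0 < g t := lt_trans (by linarith) (not_le.1 h1)
        have hgt'0 : 0 < g t' := lt_trans (by linarith) (not_le.1 h2)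
        have hinv : (g t')⁻¹ ≤ (g t)⁻¹ := by
          apply inv_anti₀ hgt0 hle
        have hlog : Real.logb 2 (g t')⁻¹ ≤ Real.logb 2 (g t)⁻¹ :=
          (Real.logb_le_logb (by norm_num) (inv_pos.2 hgt'0) (inv_pos.2 hgt0)).2 hinv
        simp only [hℓdef, if_neg h1, if_neg h2]
        exact Nat.add_le_add_right (Nat.floor_mono hlog) 1
  -- locating the piece containing a point
  have hfind : ∀ t, 1 ≤ t → t ≤ T → ∃ m, 1 ≤ m ∧ m ≤ υ ∧ p m ≤ t ∧ t < p (m+1) := by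
    intro t h1 h2
    have hne : ((Finset.Icc 1 υ).filter (fun m => p m ≤ t)).Nonempty := by
      refine ⟨1, Finset.mem_filter.2 ⟨Finset.mem_Icc.2 ⟨le_rfl, hυ⟩, ?_⟩⟩
      rw [hp1]; exact h1
    set M := ((Finset.Icc 1 υ).filter (fun m => p m ≤ t)).max' hne with hMdef
    have hM := Finset.max'_mem _ hne
    rw [Finset.mem_filter, Finset.mem_Icc] at hM
    refine ⟨M, hM.1.1, hM.1.2, hM.2, ?_⟩
    by_cases hMυ : M = υ
    · rw [hMυ, hpend]; omega
    · by_contra hcon; push_neg at hcon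
      have hmem : M + 1 ∈ (Finset.Icc 1 υ).filter (fun m => p m ≤ t) :=
        Finset.mem_filter.2 ⟨Finset.mem_Icc.2 ⟨by omega, by omega⟩, hcon⟩
      have := Finset.le_max' _ _ hmem
      omega
  -- the set of breakpoints
  set S := (Finset.Icc 1 (T+1)).filter
      (fun t => t = 1 ∨ t = T+1 ∨ (∃ m, 1 ≤ m ∧ m ≤ υ+1 ∧ p m = t) ∨
        (2 ≤ t ∧ t ≤ T ∧ ℓ t ≠ ℓ (t-1))) with hSdef
  have hmemS : ∀ t, t ∈ S ↔ (1 ≤ t ∧ t ≤ T+1) ∧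
      (t = 1 ∨ t = T+1 ∨ (∃ m, 1 ≤ m ∧ m ≤ υ+1 ∧ p m = t) ∨
        (2 ≤ t ∧ t ≤ T ∧ ℓ t ≠ ℓ (t-1))) := by
    intro t; rw [hSdef, Finset.mem_filter, Finset.mem_Icc]
  have h1S : (1:ℕ) ∈ S := (hmemS 1).2 ⟨⟨le_rfl, by omega⟩, Or.inl rfl⟩
  have hTS : T+1 ∈ S := (hmemS _).2 ⟨⟨by omega, le_rfl⟩, Or.inr (Or.inl rfl)⟩
  have hpS : ∀ m, 1 ≤ m → m ≤ υ+1 → p m ∈ S := by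
    intro m h1 h2
    exact (hmemS _).2 ⟨⟨hpge1 m h1 h2, hpleT m h1 h2⟩, Or.inr (Or.inr (Or.inl ⟨m, h1, h2, rfl⟩))⟩
  -- cardinality of breakpoints within one piece
  have hSmcard : ∀ m, 1 ≤ m → m ≤ υ →
      (S.filter fun t => p m ≤ t ∧ t < p (m+1)).card ≤ L := by
    intro m hm1 hm2
    have hpm1 : 1 ≤ p m := hpge1 m hm1 (by omega)
    have hpm2 : p (m+1) ≤ T + 1 := hpleT (m+1) (by omega) (by omega)
    have hIccT : ∀ t ∈ S.filter fun t => p m ≤ t ∧ t < p (m+1), t ∈ Finset.Icc 1 T := by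
      intro t ht
      rw [Finset.mem_filter] at ht
      exact Finset.mem_Icc.2 ⟨by omega, by omega⟩
    have hcardL : (Finset.Icc 1 L).card = L := by rw [Nat.card_Icc]; omega
    rw [← hcardL]
    apply Finset.card_le_card_of_injOn ℓ
    · intro t ht
      exact Finset.mem_Icc.2 ⟨hℓge t, hℓle t (hIccT t ht)⟩
    · -- injectivity of ℓ on the breakpoints of one piece
      have key : ∀ t t', t ∈ S.filter (fun t => p m ≤ t ∧ t < p (m+1)) →
          t' ∈ S.filter (fun t => p m ≤ t ∧ t < p (m+1)) → t < t' → ℓ t ≠ ℓ t' := by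
        intro t t' ht ht' hlt
        have htI := hIccT t ht
        have ht'I := hIccT t' ht'
        rw [Finset.mem_filter] at ht ht'
        obtain ⟨htS, htm1, htm2⟩ := ht
        obtain ⟨ht'S, ht'm1, ht'm2⟩ := ht'
        have hcond := ((hmemS t').1 ht'S).2
        -- t' must be a change point
        have hchange : 2 ≤ t' ∧ t' ≤ T ∧ ℓ t' ≠ ℓ (t'-1) := by
          rcases hcond with h | h | ⟨m', hm'1, hm'2, hm'⟩ | h
          · omega
          · exfalso; omega
          · exfalso
            have hgt : m < m' := by
              by_contra hcon; push_neg at hcon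
              have := hple m' m hm'1 hcon (by omega)
              omega
            have hlt' : m' < m + 1 := by
              by_contra hcon; push_neg at hcon
              have := hple (m+1) m' (by omega) hcon hm'2
              omega
            omega
          · exact h
        obtain ⟨hch1, hch2, hch3⟩ := hchange
        have ht'm1I : t' - 1 ∈ Finset.Icc 1 T := Finset.mem_Icc.2 ⟨by omega, by omega⟩
        have hmemt : t ∈ Set.Ico (p m) (p (m+1)) := ⟨htm1, htm2⟩
        have hmemt'1 : t' - 1 ∈ Set.Ico (p m) (p (m+1)) := ⟨by omega, by omega⟩
        have hmemt' : t' ∈ Set.Ico (p m) (p (m+1)) := ⟨ht'm1, ht'm2⟩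
        rcases hmono m (Finset.mem_Icc.2 ⟨hm1, hm2⟩) with hmon | hant
        · have e1 : ℓ t' ≤ ℓ (t'-1) :=
            hmono_ℓ (t'-1) t' ht'm1I ht'I (hmon hmemt'1 hmemt' (by omega))
          have e2 : ℓ (t'-1) ≤ ℓ t :=
            hmono_ℓ t (t'-1) htI ht'm1I (hmon hmemt hmemt'1 (by omega))
          omega
        · have e1 : ℓ (t'-1) ≤ ℓ t' :=
            hmono_ℓ t' (t'-1) ht'I ht'm1I (hant hmemt'1 hmemt' (by omega))
          have e2 : ℓ t ≤ ℓ (t'-1) :=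
            hmono_ℓ (t'-1) t ht'm1I htI (hant hmemt hmemt'1 (by omega))
          omega
      intro a ha b hb hab
      rcases lt_trichotomy a b with h | h | h
      · exact absurd hab (key a b ha hb h)
      · exact h
      · exact absurd hab.symm (key b a hb ha h)
  -- total cardinality bound
  have hScard : S.card ≤ υ * L + 1 := by
    have hsub : S ⊆ insert (T+1) ((Finset.Icc 1 υ).biUnion
        fun m => S.filter fun t => p m ≤ t ∧ t < p (m+1)) := by
      intro t ht
      by_cases htT : t = T+1
      · simp [htT]
      · rw [Finset.mem_insert, Finset.mem_biUnion]
        right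
        have hrange := ((hmemS t).1 ht).1
        obtain ⟨m, hm1, hm2, hm3, hm4⟩ := hfind t hrange.1 (by omega)
        exact ⟨m, Finset.mem_Icc.2 ⟨hm1, hm2⟩, Finset.mem_filter.2 ⟨ht, hm3, hm4⟩⟩
    calc S.card ≤ _ := Finset.card_le_card hsub
      _ ≤ ((Finset.Icc 1 υ).biUnion
            fun m => S.filter fun t => p m ≤ t ∧ t < p (m+1)).card + 1 :=
          Finset.card_insert_le _ _
      _ ≤ (∑ m ∈ Finset.Icc 1 υ, (S.filter fun t => p m ≤ t ∧ t < p (m+1)).card) + 1 :=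
          by exact Nat.add_le_add_right (Finset.card_biUnion_le) 1
      _ ≤ (Finset.Icc 1 υ).card • L + 1 := by
          refine Nat.add_le_add_right ?_ 1
          exact Finset.sum_le_card_nsmul _ _ L (fun m hm => by
            rw [Finset.mem_Icc] at hm; exact hSmcard m hm.1 hm.2)
      _ = υ * L + 1 := by rw [Nat.card_Icc]; simp [smul_eq_mul]
  -- the sorted enumeration of S
  set l := S.sort (· ≤ ·) with hldef
  have hlen : l.length = S.card := Finset.length_sort _
  have hsort : l.SortedLT := Finset.sortedLT_sort S
  have hstrict : StrictMono l.get := hsort.strictMono_get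
  have hSne : S.Nonempty := ⟨1, h1S⟩
  have hcard_pos : 0 < S.card := Finset.card_pos.2 hSne
  obtain ⟨N, hN1⟩ : ∃ N, N + 1 = S.card := ⟨S.card - 1, by omega⟩
  have hget : ∀ i (h : i < l.length), l.getD i 0 = l.get ⟨i, h⟩ :=
    fun i h => List.getD_eq_get l 0 ⟨i, h⟩
  have hmemget : ∀ i (h : i < l.length), l.get ⟨i, h⟩ ∈ S :=
    fun i h => (Finset.mem_sort (α := ℕ) (· ≤ ·)).1 (l.get_mem ⟨i, h⟩)
  have hrangeget : ∀ i (h : i < l.length), 1 ≤ l.get ⟨i, h⟩ ∧ l.get ⟨i, h⟩ ≤ T + 1 :=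
    fun i h => ((hmemS _).1 (hmemget i h)).1
  -- next-element property
  have hnext : ∀ (k k' : ℕ) (hk : k < l.length) (hk' : k' < l.length), k + 1 = k' →
      ∀ s' ∈ S, l.get ⟨k, hk⟩ < s' → l.get ⟨k', hk'⟩ ≤ s' := by
    intro k k' hk hk' hkk s' hs' hlt
    obtain ⟨⟨n, hn⟩, hgn⟩ := List.mem_iff_get.1 (show _ ∈ l from (Finset.mem_sort (α := ℕ) (· ≤ ·)).2 hs')
    have hkn : k < n := by
      by_contra hcon; push_neg at hcon
      have := hstrict.monotone (show (⟨n, hn⟩ : Fin l.length) ≤ ⟨k, hk⟩ from hcon)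
      omega
    have := hstrict.monotone (show (⟨k', hk'⟩ : Fin l.length) ≤ ⟨n, hn⟩ from by
      simp only [Fin.mk_le_mk]; omega)
    omega
  refine ⟨N, fun i => l.getD (i-1) 0, by omega, ?_, ?_, ?_, ?_, ?_⟩
  · -- j 1 = 1
    have h0 : 0 < l.length := by omega
    show l.getD 0 0 = 1
    rw [hget 0 h0]
    obtain ⟨⟨n, hn⟩, hgn⟩ := List.mem_iff_get.1 (show _ ∈ l from (Finset.mem_sort (α := ℕ) (· ≤ ·)).2 h1S)
    have hle : l.get ⟨0, h0⟩ ≤ l.get ⟨n, hn⟩ :=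
      hstrict.monotone (show (⟨0, h0⟩ : Fin l.length) ≤ ⟨n, hn⟩ from by
        simp only [Fin.mk_le_mk]; omega)
    have := (hrangeget 0 h0).1
    omega
  · -- j (N+1) = T+1
    have hNl : N < l.length := by omega
    show l.getD (N+1-1) 0 = T + 1
    have heq : N + 1 - 1 = N := by omega
    rw [heq, hget N hNl]
    obtain ⟨⟨n, hn⟩, hgn⟩ := List.mem_iff_get.1 (show _ ∈ l from (Finset.mem_sort (α := ℕ) (· ≤ ·)).2 hTS)
    have hle : l.get ⟨n, hn⟩ ≤ l.get ⟨N, hNl⟩ :=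
      hstrict.monotone (show (⟨n, hn⟩ : Fin l.length) ≤ ⟨N, hNl⟩ from by
        simp only [Fin.mk_le_mk]; omega)
    have := (hrangeget N hNl).2
    omega
  · -- strict increase
    intro i hi
    rw [Finset.mem_Icc] at hi
    have hi1 : i - 1 < l.length := by omega
    have hi2 : i < l.length := by omega
    show l.getD (i-1) 0 < l.getD (i+1-1) 0
    have : i + 1 - 1 = i := by omega
    rw [this, hget (i-1) hi1, hget i hi2]
    exact hstrict (show (⟨i-1, hi1⟩ : Fin l.length) < ⟨i, hi2⟩ from by
      simp only [Fin.mk_lt_mk]; omega)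
  · -- refinement
    intro m hm
    rw [Finset.mem_Icc] at hm
    obtain ⟨⟨n, hn⟩, hgn⟩ := List.mem_iff_get.1 (show _ ∈ l from (Finset.mem_sort (α := ℕ) (· ≤ ·)).2 (hpS m hm.1 hm.2))
    refine ⟨n + 1, Finset.mem_Icc.2 ⟨by omega, by omega⟩, ?_⟩
    show l.getD (n+1-1) 0 = p m
    have : n + 1 - 1 = n := by omega
    rw [this, hget n hn, hgn]
  · -- the dichotomy on each block
    intro i hi
    rw [Finset.mem_Icc] at hi
    have hi1 : i - 1 < l.length := by omega
    have hi2 : i < l.length := by omega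
    have hj1 : l.getD (i-1) 0 = l.get ⟨i-1, hi1⟩ := hget _ _
    have hj2 : l.getD (i+1-1) 0 = l.get ⟨i, hi2⟩ := by
      have : i + 1 - 1 = i := by omega
      rw [this]; exact hget _ _
    simp only [hj1, hj2]
    set a := l.get ⟨i-1, hi1⟩ with ha
    set b := l.get ⟨i, hi2⟩ with hb
    have hab : a < b := hstrict (show (⟨i-1, hi1⟩ : Fin l.length) < ⟨i, hi2⟩ from by
      simp only [Fin.mk_lt_mk]; omega)
    have haS : a ∈ S := hmemget _ _
    have hbS : b ∈ S := hmemget _ _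
    have har : 1 ≤ a ∧ a ≤ T + 1 := ((hmemS a).1 haS).1
    have hbr : 1 ≤ b ∧ b ≤ T + 1 := ((hmemS b).1 hbS).1
    obtain ⟨m, hm1, hm2, hma, ham⟩ := hfind a har.1 (by omega)
    have hbpm : b ≤ p (m+1) :=
      hnext (i-1) i hi1 hi2 (by omega) (p (m+1)) (hpS (m+1) (by omega) (by omega)) ham
    have hnotS : ∀ u, a < u → u < b → u ∉ S := by
      intro u h1 h2 hu
      have := hnext (i-1) i hi1 hi2 (by omega) u hu h1
      omega
    -- ℓ is constant on [a, b)
    have hconst : ∀ d, a + d < b → ℓ (a + d) = ℓ a := by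
      intro d
      induction d with
      | zero => intro _; rfl
      | succ e ih =>
        intro hlt
        have hu : a + e + 1 ∉ S := hnotS _ (by omega) (by omega)
        have heq : ℓ (a + e + 1) = ℓ (a + e) := by
          by_contra hne
          exact hu ((hmemS _).2 ⟨⟨by omega, by omega⟩,
            Or.inr (Or.inr (Or.inr ⟨by omega, by omega, by simpa using hne⟩))⟩)
        rw [show a + (e+1) = a + e + 1 from rfl, heq, ih (by omega)]
    have hconst' : ∀ t, a ≤ t → t < b → ℓ t = ℓ a := by
      intro t h1 h2
      have : t = a + (t - a) := by omega
      rw [this]; exact hconst _ (by omega)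
    have hImem : ∀ t, a ≤ t → t < b → t ∈ Finset.Icc 1 T :=
      fun t h1 h2 => Finset.mem_Icc.2 ⟨by omega, by omega⟩
    have haI : a ∈ Finset.Icc 1 T := hImem a le_rfl hab
    by_cases hca : g a ≤ 2*c
    · left
      intro t ht
      rw [Finset.mem_Ico] at ht
      by_contra hgt
      have hla : ℓ a = L := by simp [hℓdef, hca]
      have h1 := hconst' t ht.1 ht.2
      have h2 := hℓub t (hImem t ht.1 ht.2) hgt
      omega
    · right
      have hlaub : ℓ a ≤ L - 1 := hℓub a haI hca
      have hforced : ∀ t, a ≤ t → t < b → ¬ (g t ≤ 2*c) := by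
        intro t h1 h2 hle
        have : ℓ t = L := by simp [hℓdef, hle]
        have := hconst' t h1 h2
        omega
      have hfloor : ∀ t, a ≤ t → t < b →
          ⌊Real.logb 2 (g t)⁻¹⌋₊ + 1 = ℓ t := by
        intro t h1 h2
        simp [hℓdef, hforced t h1 h2]
      intro t ht t' ht'
      rw [Finset.mem_Ico] at ht ht'
      have hgt := hg t (hImem t ht.1 ht.2)
      have hgt' := hg t' (hImem t' ht'.1 ht'.2)
      have h1 : 0 < g t := lt_trans (by linarith) (not_le.1 (hforced t ht.1 ht.2))
      have h2 : 0 < g t' := lt_trans (by linarith) (not_le.1 (hforced t' ht'.1 ht'.2))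
      apply factor_two h1 h2 hgt.2 hgt'.2
      have e1 := hfloor t ht.1 ht.2
      have e2 := hfloor t' ht'.1 ht'.2
      have e3 := hconst' t ht.1 ht.2
      have e4 := hconst' t' ht'.1 ht'.2
      omega
end
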